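/- The relation ≡ed_{E(x,y)} satisfies the divergence condition D4: for all x, y ∈ {o,b}, if s ≡ed_{E(x,y)} t and there is an infinite divergent sequence s = s0 →τ s1 →τ s2 →τ ⋯, then there exist a state t' and an index k such that t ↠⁺ t' and s_k ≡ed_{E(x,y)} t'. -/
import Mathlib


namespace GamesBisim

/-- Parameter values `o` (ordinary) and `b` (branching) for generic bisimulations. -/
inductive XY | o | b
deriving DecidableEq

/-- The faces ☹ (frown) and ☺ (smile). -/
inductive Face | frown | smile
deriving DecidableEq

/-- Rewards: `*` (star) and `✓` (check). -/
inductive Rw | star | check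
deriving DecidableEq

/-- A labelled transition system with states `S`, actions `A` containing a
distinguished silent action `tau`, and a transition relation. -/
structure LTS (S : Type u) (A : Type v) where
  tau : A
  Trans : S → A → S → Prop

namespace LTS

variable {S : Type u} {A : Type v}

/-- A single silent (τ) step. -/
def TauStep (L : LTS S A) (s s' : S) : Prop := L.Trans s L.tau s'

/-- `↠`: the reflexive-transitive closure of the τ-step relation. -/
def TauStar (L : LTS S A) : S → S → Prop := Relation.ReflTransGen L.TauStep

/-- `↠⁺`: the transitive closure of the τ-step relation. -/
def TauPlus (L : LTS S A) : S → S → Prop := Relation.TransGen L.TauStep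

/-- An LTS is non-divergent if it admits no infinite sequence of τ-steps. -/
def NonDivergent (L : LTS S A) : Prop :=
  ¬ ∃ f : ℕ → S, ∀ i, L.TauStep (f i) (f (i + 1))

/-- A symmetric relation `R` is a branching bisimulation. -/
def IsBranchingBisim (L : LTS S A) (R : S → S → Prop) : Prop :=
  (∀ s t, R s t → R t s) ∧
  ∀ s t a s', R s t → L.Trans s a s' →
    (a = L.tau ∧ R s' t) ∨
    ∃ t1 t', L.TauStar t t1 ∧ L.Trans t1 a t' ∧ R s t1 ∧ R s' t'

/-- Branching bisimilarity `≈b`. -/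
def BranchingBisimilar (L : LTS S A) (s t : S) : Prop :=
  ∃ R, L.IsBranchingBisim R ∧ R s t

/-- A symmetric relation `R` is a delay bisimulation. -/
def IsDelayBisim (L : LTS S A) (R : S → S → Prop) : Prop :=
  (∀ s t, R s t → R t s) ∧
  ∀ s t a s', R s t → L.Trans s a s' →
    (a = L.tau ∧ R s' t) ∨
    ∃ t1 t', L.TauStar t t1 ∧ L.Trans t1 a t' ∧ R s' t'

/-- The generalised weak transition `s ↠_{x,R,t} s'`: a weak transition `s ↠ s'`,
which in case `x = b` additionally satisfies `t R s` and `t R s'`. -/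
def GenTauStar (L : LTS S A) (x : XY) (R : S → S → Prop) (t : S) (s s' : S) : Prop :=
  L.TauStar s s' ∧ (x = XY.b → R t s ∧ R t s')

/-- The strong generalised weak transition `s ⟹_{x,R,t} s'`: a weak transition
`s ↠ s'`, which in case `x = b` is witnessed by a finite τ-path all of whose states
are related to `t` by `R`. -/
def SGenTauStar (L : LTS S A) (x : XY) (R : S → S → Prop) (t : S) (s s' : S) : Prop :=
  L.TauStar s s' ∧
  (x = XY.b → R t s ∧ Relation.ReflTransGen (fun u u' => L.TauStep u u' ∧ R t u') s s')

/-- A symmetric relation `R` is an `(x,y)`-generic bisimulation. -/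
def IsGenBisim (L : LTS S A) (x y : XY) (R : S → S → Prop) : Prop :=
  (∀ s t, R s t → R t s) ∧
  ∀ s t a s', R s t → L.Trans s a s' →
    (a = L.tau ∧ R s' t) ∨
    ∃ t1 t2 t', L.GenTauStar x R s t t1 ∧ L.Trans t1 a t2 ∧
      L.GenTauStar y R s' t2 t' ∧ R s' t'

/-- `(x,y)`-generic bisimilarity `≈_{(x,y)}`. -/
def GenBisimilar (L : LTS S A) (x y : XY) (s t : S) : Prop :=
  ∃ R, L.IsGenBisim x y R ∧ R s t

/-- A symmetric relation `R` is an `(x,y)`-generic bisimulation with explicit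
divergence (divergence condition D₄). -/
def IsGenBisimED (L : LTS S A) (x y : XY) (R : S → S → Prop) : Prop :=
  L.IsGenBisim x y R ∧
  ∀ s t, R s t → ∀ f : ℕ → S, f 0 = s → (∀ i, L.TauStep (f i) (f (i + 1))) →
    ∃ t' k, L.TauPlus t t' ∧ R (f k) t'

/-- `(x,y)`-generic bisimilarity with explicit divergence `≈ed_{(x,y)}`. -/
def GenBisimilarED (L : LTS S A) (x y : XY) (s t : S) : Prop :=
  ∃ R, L.IsGenBisimED x y R ∧ R s t

end LTS

/-- A relation `R` has the stuttering property: whenever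
`t₀ →τ t₁ →τ ⋯ →τ t_k` and `t₀ R t_k`, then `t_i R t_j` for all `0 ≤ i,j ≤ k`. -/
def StutteringProperty {S : Type u} {A : Type v} (L : LTS S A) (R : S → S → Prop) : Prop :=
  ∀ (k : ℕ) (t : ℕ → S),
    (∀ i < k, L.TauStep (t i) (t (i + 1))) → R (t 0) (t k) →
    ∀ i j, i ≤ k → j ≤ k → R (t i) (t j)

/-! ## Two-player games

A play is a maximal (finite or infinite) sequence of configurations connected by
moves, represented as `π : ℕ → Option C` which is `none` from the point (if any)
where the play has ended; a play may only end in a configuration whose owner is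
stuck. A strategy for a player is a (positional) function `σ : C → C` which is
required to pick a legal move at every configuration owned by that player admitting
at least one move; a play is consistent with `σ` if every move taken from a
configuration owned by that player follows `σ`. -/

section Games

variable {C : Type u}

/-- `π` is a maximal play of the game with move relation `move`. -/
def IsPlay (move : C → C → Prop) (π : ℕ → Option C) : Prop :=
  (∀ i c d, π i = some c → π (i + 1) = some d → move c d) ∧
  (∀ i c, π i = some c → π (i + 1) = none → ∀ d, ¬ move c d) ∧
  (∀ i, π i = none → π (i + 1) = none)

/-- The play `π` is consistent with strategy `σ` of the player owning the
configurations satisfying `owned`. -/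
def ConsistentWith (owned : C → Prop) (σ : C → C) (π : ℕ → Option C) : Prop :=
  ∀ i c d, π i = some c → owned c → π (i + 1) = some d → d = σ c

/-- `σ` is a valid strategy for the player owning the configurations satisfying
`owned`: it picks a legal move wherever a move exists. -/
def ValidStrategy (owned : C → Prop) (move : C → C → Prop) (σ : C → C) : Prop :=
  ∀ c, owned c → (∃ d, move c d) → move c (σ c)

/-- The play `π` is finite and ends in the configuration `c`. -/
def EndsAt (π : ℕ → Option C) (c : C) : Prop := ∃ i, π i = some c ∧ π (i + 1) = none

/-- The play `π` is infinite. -/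
def InfinitePlay (π : ℕ → Option C) : Prop := ∀ i, π i ≠ none

/-- The Büchi winning condition on infinite plays: the play passes through
infinitely many configurations carrying a `✓` reward. -/
def BuchiWin (reward : C → Prop) (π : ℕ → Option C) : Prop :=
  ∀ n, ∃ i, n ≤ i ∧ ∃ c, π i = some c ∧ reward c

/-- Duplicator wins the play `π`: either the play is finite and Spoiler is stuck,
or the play is infinite and satisfies the winning condition `infWin`. -/
def DupWinsPlay (dupOwned : C → Prop) (infWin : (ℕ → Option C) → Prop)
    (π : ℕ → Option C) : Prop :=
  (∃ c, EndsAt π c ∧ ¬ dupOwned c) ∨ (InfinitePlay π ∧ infWin π)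

/-- Spoiler wins the play `π` (all plays not won by Duplicator). -/
def SpWinsPlay (dupOwned : C → Prop) (infWin : (ℕ → Option C) → Prop)
    (π : ℕ → Option C) : Prop :=
  (∃ c, EndsAt π c ∧ dupOwned c) ∨ (InfinitePlay π ∧ ¬ infWin π)

/-- Duplicator wins the configuration `c`: she has a strategy winning all plays
starting in `c`. -/
def DupWins (dupOwned : C → Prop) (move : C → C → Prop)
    (infWin : (ℕ → Option C) → Prop) (c : C) : Prop :=
  ∃ σ : C → C, ValidStrategy dupOwned move σ ∧
    ∀ π, IsPlay move π → π 0 = some c → ConsistentWith dupOwned σ π →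
      DupWinsPlay dupOwned infWin π

/-- Spoiler wins the configuration `c`: he has a strategy winning all plays
starting in `c`. -/
def SpWins (dupOwned : C → Prop) (move : C → C → Prop)
    (infWin : (ℕ → Option C) → Prop) (c : C) : Prop :=
  ∃ σ : C → C, ValidStrategy (fun d => ¬ dupOwned d) move σ ∧
    ∀ π, IsPlay move π → π 0 = some c → ConsistentWith (fun d => ¬ dupOwned d) σ π →
      SpWinsPlay dupOwned infWin π

end Games

/-! ## The limited branching bisimulation (lbb) game -/

/-- Configurations of the lbb game: Spoiler-owned `⟨(s,t)⟩` and Duplicator-owned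
`⟨(s,t),(a,s')⟩`. -/
inductive LConf (S : Type u) (A : Type v)
  | sp (p : S × S)
  | dup (p : S × S) (c : A × S)

/-- Ownership in the lbb game. -/
def LConf.dupOwned {S : Type u} {A : Type v} : LConf S A → Prop
  | .sp _ => False
  | .dup _ _ => True

/-- Moves of the lbb game. -/
inductive LMove {S : Type u} {A : Type v} (L : LTS S A) : LConf S A → LConf S A → Prop
  | sp1 {s t a s'} (h : L.Trans s a s') :
      LMove L (LConf.sp (s, t)) (LConf.dup (s, t) (a, s'))
  | sp2 {s t a t'} (h : L.Trans t a t') :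
      LMove L (LConf.sp (s, t)) (LConf.dup (t, s) (a, t'))
  | dup1 {u v u'} :
      LMove L (LConf.dup (u, v) (L.tau, u')) (LConf.sp (u', v))
  | dup2 {u v a u' v'} (h : L.Trans v a v') :
      LMove L (LConf.dup (u, v) (a, u')) (LConf.sp (u', v'))
  | dup3 {u v a u' v'} (h : L.TauStep v v') :
      LMove L (LConf.dup (u, v) (a, u')) (LConf.sp (u, v'))

/-- `s ≡lb t`: Duplicator wins the lbb game from `⟨(s,t)⟩_S`; finite plays are won
by Duplicator iff Spoiler is stuck, and all infinite plays are won by Duplicator. -/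
def LTS.lbbEquiv {S : Type u} {A : Type v} (L : LTS S A) (s t : S) : Prop :=
  DupWins LConf.dupOwned (LMove L) (fun _ => True) (LConf.sp (s, t))

/-! ## The branching bisimulation (bb) game -/

/-- Configurations of the bb game: `⟨(s,t),c,r⟩` owned by Spoiler or Duplicator,
with challenge `c ∈ (A × S) ∪ {†}` (where `none` is `†`) and reward `r`. -/
inductive BConf (S : Type u) (A : Type v)
  | sp (p : S × S) (c : Option (A × S)) (r : Rw)
  | dup (p : S × S) (c : Option (A × S)) (r : Rw)

/-- Ownership in the bb game. -/
def BConf.dupOwned {S : Type u} {A : Type v} : BConf S A → Prop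
  | .sp _ _ _ => False
  | .dup _ _ _ => True

/-- The configuration carries a `✓` reward. -/
def BConf.reward {S : Type u} {A : Type v} : BConf S A → Prop
  | .sp _ _ r => r = Rw.check
  | .dup _ _ r => r = Rw.check

/-- Moves of the bb game. -/
inductive BMove {S : Type u} {A : Type v} (L : LTS S A) : BConf S A → BConf S A → Prop
  | sp1star {s t c r a s'} (h : L.Trans s a s') (hc : c = some (a, s') ∨ c = none) :
      BMove L (BConf.sp (s, t) c r) (BConf.dup (s, t) (some (a, s')) Rw.star)
  | sp1check {s t c r a s'} (h : L.Trans s a s')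
      (hc : ¬(c = some (a, s') ∨ c = none)) :
      BMove L (BConf.sp (s, t) c r) (BConf.dup (s, t) (some (a, s')) Rw.check)
  | sp2 {s t c r a t'} (h : L.Trans t a t') :
      BMove L (BConf.sp (s, t) c r) (BConf.dup (t, s) (some (a, t')) Rw.check)
  | dup1 {u v u' r} :
      BMove L (BConf.dup (u, v) (some (L.tau, u')) r) (BConf.sp (u', v) none Rw.check)
  | dup2 {u v a u' v' r} (h : L.Trans v a v') :
      BMove L (BConf.dup (u, v) (some (a, u')) r) (BConf.sp (u', v') none Rw.check)
  | dup3 {u v a u' v' r} (h : L.TauStep v v') :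
      BMove L (BConf.dup (u, v) (some (a, u')) r)
        (BConf.sp (u, v') (some (a, u')) Rw.star)

/-- `s ≡b t`: Duplicator wins the bb game from `⟨(s,t),†,*⟩_S`, where infinite
plays are won by Duplicator iff they yield infinitely many `✓` rewards. -/
def LTS.bbEquiv {S : Type u} {A : Type v} (L : LTS S A) (s t : S) : Prop :=
  DupWins BConf.dupOwned (BMove L) (BuchiWin BConf.reward) (BConf.sp (s, t) none Rw.star)

/-! ## The generic bisimulation (gb) game, and its explicit-divergence variant -/

/-- Configurations of the generic games: `⟨(s,t),c,m,r⟩` owned by Spoiler or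
Duplicator, with challenge `c ∈ (A × S) ∪ {†}`, partial match
`m ∈ (S × {☹,☺}) ∪ {†}` and reward `r`. -/
inductive GConf (S : Type u) (A : Type v)
  | sp (p : S × S) (c : Option (A × S)) (m : Option (S × Face)) (r : Rw)
  | dup (p : S × S) (c : Option (A × S)) (m : Option (S × Face)) (r : Rw)

/-- Ownership in the generic games. -/
def GConf.dupOwned {S : Type u} {A : Type v} : GConf S A → Prop
  | .sp _ _ _ _ => False
  | .dup _ _ _ _ => True

/-- The configuration carries a `✓` reward. -/
def GConf.reward {S : Type u} {A : Type v} : GConf S A → Prop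
  | .sp _ _ _ r => r = Rw.check
  | .dup _ _ _ r => r = Rw.check

/-- Moves of the `E`-generic bisimulation game. The parameter `rw1` is the reward
handed out by Duplicator's rule (1): `✓` in the gb game, `*` in the gbed game. -/
inductive GMove {S : Type u} {A : Type v} (L : LTS S A) (E : Set Face) (rw1 : Rw) :
    GConf S A → GConf S A → Prop
  | sp1 {s t c m r} (hc : c ≠ none) :
      GMove L E rw1 (GConf.sp (s, t) c m r) (GConf.dup (s, t) c m Rw.star)
  | sp2a {s t m r a s'} (h : L.Trans s a s') :
      GMove L E rw1 (GConf.sp (s, t) none m r)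
        (GConf.dup (s, t) (some (a, s')) (some (t, Face.frown)) Rw.star)
  | sp2b {s t c m r a s'} (h : L.Trans s a s') (hc : c ≠ some (a, s')) :
      GMove L E rw1 (GConf.sp (s, t) c m r)
        (GConf.dup (s, t) (some (a, s')) (some (t, Face.frown)) Rw.check)
  | sp3 {s t c m r a t'} (h : L.Trans t a t') :
      GMove L E rw1 (GConf.sp (s, t) c m r)
        (GConf.dup (t, s) (some (a, t')) (some (s, Face.frown)) Rw.check)
  | dup1 {u v u' vb f r} :
      GMove L E rw1 (GConf.dup (u, v) (some (L.tau, u')) (some (vb, f)) r)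
        (GConf.sp (u', vb) none none rw1)
  | dup2a {u v a u' vb v' r} (h : L.Trans vb a v') :
      GMove L E rw1 (GConf.dup (u, v) (some (a, u')) (some (vb, Face.frown)) r)
        (GConf.sp (u', v') (some (a, u')) (some (v', Face.smile)) Rw.star)
  | dup2b {u v a u' vb v' r} (h : L.Trans vb a v') :
      GMove L E rw1 (GConf.dup (u, v) (some (a, u')) (some (vb, Face.frown)) r)
        (GConf.sp (u', v') none none Rw.check)
  | dup2c {u v a u' vb v' r} (h : L.Trans vb a v') (hE : Face.smile ∈ E) :
      GMove L E rw1 (GConf.dup (u, v) (some (a, u')) (some (vb, Face.frown)) r)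
        (GConf.sp (u, v) (some (a, u')) (some (v', Face.smile)) Rw.star)
  | dup3a {u v a u' vb f v' r} (h : L.TauStep vb v') :
      GMove L E rw1 (GConf.dup (u, v) (some (a, u')) (some (vb, f)) r)
        (GConf.sp (u, v') (some (a, u')) (some (v', f)) Rw.star)
  | dup3b {u v a u' vb v' r} (h : L.TauStep vb v') :
      GMove L E rw1 (GConf.dup (u, v) (some (a, u')) (some (vb, Face.smile)) r)
        (GConf.sp (u', v') none none Rw.check)
  | dup3c {u v a u' vb f v' r} (h : L.TauStep vb v') (hE : f ∈ E) :
      GMove L E rw1 (GConf.dup (u, v) (some (a, u')) (some (vb, f)) r)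
        (GConf.sp (u, v) (some (a, u')) (some (v', f)) Rw.star)

/-- `E(x,y) ⊆ {☹,☺}`: the smallest set containing `☹` when `x = o` and `☺` when
`y = o`. -/
def Exy (x y : XY) : Set Face :=
  {f | (f = Face.frown ∧ x = XY.o) ∨ (f = Face.smile ∧ y = XY.o)}

/-- `s ≡_E t`: Duplicator wins the `E`-generic bisimulation game from
`⟨(s,t),†,†,*⟩_S`; infinite plays are won by Duplicator iff they yield infinitely
many `✓` rewards. -/
def LTS.gbEquiv {S : Type u} {A : Type v} (L : LTS S A) (E : Set Face) (s t : S) : Prop :=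
  DupWins GConf.dupOwned (GMove L E Rw.check) (BuchiWin GConf.reward)
    (GConf.sp (s, t) none none Rw.star)

/-- `s ≡ed_E t`: Duplicator wins the `E`-generic bisimulation with explicit
divergence game from `⟨(s,t),†,†,*⟩_S`. -/
def LTS.gbedEquiv {S : Type u} {A : Type v} (L : LTS S A) (E : Set Face) (s t : S) : Prop :=
  DupWins GConf.dupOwned (GMove L E Rw.star) (BuchiWin GConf.reward)
    (GConf.sp (s, t) none none Rw.star)

/-- The abstraction function `f(⟨(s,t),c,m,r⟩) = ⟨(s,t),c,r⟩` from configurations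
of the generic game to configurations of the bb game, preserving ownership. -/
def fabs {S : Type u} {A : Type v} : GConf S A → BConf S A
  | .sp p c _ r => .sp p c r
  | .dup p c _ r => .dup p c r


section D4aux

variable {S : Type u} {A : Type v}

/-- Index update for Spoiler's divergence strategy: increment the counter whenever
the new configuration is a Spoiler configuration with empty challenge. -/
def nkD4 (k : ℕ) : GConf S A → ℕ
  | GConf.sp _ none _ _ => k + 1
  | _ => k

/-- One step of the play where Spoiler plays along the divergent sequence `f`
and Duplicator follows her strategy `σ`. -/
def dstepD4 (L : LTS S A) (σ : GConf S A → GConf S A) (f : ℕ → S) :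
    ℕ × GConf S A → ℕ × GConf S A
  | (k, GConf.sp p none _ _) =>
      (k, GConf.dup p (some (L.tau, f (k + 1))) (some (p.2, Face.frown)) Rw.star)
  | (k, GConf.sp p (some cc) m _) => (k, GConf.dup p (some cc) m Rw.star)
  | (k, GConf.dup p cc m r) =>
      (nkD4 k (σ (GConf.dup p cc m r)), σ (GConf.dup p cc m r))

/-- The invariant maintained along the play. -/
def DInvD4 (L : LTS S A) (t : S) (f : ℕ → S) : ℕ × GConf S A → Prop
  | (k, GConf.sp p c m _) =>
      (c = none ∧ m = none ∧ p.1 = f k ∧ L.TauStar t p.2) ∨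
      (c = some (L.tau, f (k + 1)) ∧
        ∃ vb fc, m = some (vb, fc) ∧ L.TauStar t vb ∧ L.TauStar t p.2)
  | (k, GConf.dup p c m _) =>
      c = some (L.tau, f (k + 1)) ∧
        ∃ vb fc, m = some (vb, fc) ∧ L.TauStar t vb ∧ L.TauStar t p.2

theorem dstepD4_spec {E : Set Face} (L : LTS S A) (σ : GConf S A → GConf S A)
    (hσ : ValidStrategy GConf.dupOwned (GMove L E Rw.star) σ)
    (t : S) (f : ℕ → S) (hdiv : ∀ i, L.TauStep (f i) (f (i + 1)))
    (kc : ℕ × GConf S A) (hInv : DInvD4 L t f kc) :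
    DInvD4 L t f (dstepD4 L σ f kc) ∧
      GMove L E Rw.star kc.2 (dstepD4 L σ f kc).2 ∧
      (GConf.dupOwned kc.2 → (dstepD4 L σ f kc).2 = σ kc.2) := by
  obtain ⟨k, c⟩ := kc
  match c with
  | GConf.sp (u, v) none m r =>
      rcases hInv with ⟨-, hm, hu, hv⟩ | ⟨hc, -⟩
      · have hu' : u = f k := hu
        refine ⟨?_, ?_, fun h => h.elim⟩
        · simp only [dstepD4, DInvD4]
          exact ⟨trivial, v, Face.frown, rfl, hv, hv⟩
        · exact GMove.sp2a (show L.Trans u L.tau (f (k + 1)) by rw [hu']; exact hdiv k)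
      · exact absurd hc (by simp)
  | GConf.sp (u, v) (some cc) m r =>
      rcases hInv with ⟨hc, -⟩ | ⟨hc, vb, fc, hm, hvb, hv⟩
      · exact absurd hc (by simp)
      · obtain rfl : cc = (L.tau, f (k + 1)) := by injection hc
        subst hm
        refine ⟨?_, ?_, fun h => h.elim⟩
        · simp only [dstepD4, DInvD4]
          exact ⟨trivial, vb, fc, rfl, hvb, hv⟩
        · exact GMove.sp1 (by simp)
  | GConf.dup (u, v) cc m r =>
      obtain ⟨hc, vb, fc, hm, hvb, hv⟩ := hInv
      subst hc hm
      have hmv : GMove L E Rw.star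
          (GConf.dup (u, v) (some (L.tau, f (k + 1))) (some (vb, fc)) r)
          (σ (GConf.dup (u, v) (some (L.tau, f (k + 1))) (some (vb, fc)) r)) :=
        hσ _ trivial ⟨_, GMove.dup1⟩
      refine ⟨?_, hmv, fun _ => rfl⟩
      have key : ∀ d, GMove L E Rw.star
          (GConf.dup (u, v) (some (L.tau, f (k + 1))) (some (vb, fc)) r) d →
          DInvD4 L t f (nkD4 k d, d) := by
        intro d hd
        cases hd with
        | dup1 => exact Or.inl ⟨rfl, rfl, rfl, hvb⟩
        | dup2a h =>
            exact Or.inr ⟨rfl, _, Face.smile, rfl, hvb.tail h, hvb.tail h⟩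
        | dup2b h => exact Or.inl ⟨rfl, rfl, rfl, hvb.tail h⟩
        | dup2c h hE =>
            exact Or.inr ⟨rfl, _, Face.smile, rfl, hvb.tail h, hv⟩
        | dup3a h =>
            exact Or.inr ⟨rfl, _, fc, rfl, hvb.tail h, hvb.tail h⟩
        | dup3b h => exact Or.inl ⟨rfl, rfl, rfl, hvb.tail h⟩
        | dup3c h hE =>
            exact Or.inr ⟨rfl, _, fc, rfl, hvb.tail h, hv⟩
      exact key _ hmv

/-- If Duplicator wins from `c0` with strategy `σ` and there is a σ-consistent
finite path of legal moves from `c0` to `p i`, then Duplicator wins from `p i`. -/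
theorem dupWins_tailD4 {C : Type w} {dupOwned : C → Prop} {move : C → C → Prop}
    {reward : C → Prop} {σ : C → C}
    (hσ : ValidStrategy dupOwned move σ) {c0 : C}
    (hwin : ∀ π, IsPlay move π → π 0 = some c0 → ConsistentWith dupOwned σ π →
      DupWinsPlay dupOwned (BuchiWin reward) π)
    (p : ℕ → C) (hp0 : p 0 = c0) (i : ℕ)
    (hmove : ∀ j < i, move (p j) (p (j + 1)))
    (hcons : ∀ j < i, dupOwned (p j) → p (j + 1) = σ (p j)) :
    DupWins dupOwned move (BuchiWin reward) (p i) := by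
  refine ⟨σ, hσ, fun π hπ hπ0 hπc => ?_⟩
  obtain ⟨hπ1, hπ2, hπ3⟩ := hπ
  set π' : ℕ → Option C := fun n => if n < i then some (p n) else π (n - i) with hπ'def
  have hge : ∀ n, i ≤ n → π' n = π (n - i) := fun n hn => if_neg (by omega)
  have hle : ∀ n, n ≤ i → π' n = some (p n) := by
    intro n hn
    rcases lt_or_eq_of_le hn with h | h
    · exact if_pos h
    · subst h
      rw [hge n le_rfl, Nat.sub_self, hπ0]
  have hplay' : IsPlay move π' := by
    refine ⟨?_, ?_, ?_⟩
    · intro j c d h1 h2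
      by_cases hj : j < i
      · rw [hle j (le_of_lt hj)] at h1
        rw [hle (j + 1) hj] at h2
        obtain rfl : c = p j := by injection h1.symm
        obtain rfl : d = p (j + 1) := by injection h2.symm
        exact hmove j hj
      · have hj' : i ≤ j := by omega
        rw [hge j hj'] at h1
        rw [hge (j + 1) (by omega), show j + 1 - i = (j - i) + 1 by omega] at h2
        exact hπ1 (j - i) c d h1 h2
    · intro j c h1 h2
      by_cases hj : j < i
      · rw [hle (j + 1) hj] at h2; exact absurd h2 (by simp)
      · have hj' : i ≤ j := by omega
        rw [hge j hj'] at h1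
        rw [hge (j + 1) (by omega), show j + 1 - i = (j - i) + 1 by omega] at h2
        exact hπ2 (j - i) c h1 h2
    · intro j h1
      have hj : ¬ j < i := by
        intro hj; rw [hle j (le_of_lt hj)] at h1; exact absurd h1 (by simp)
      have hj' : i ≤ j := by omega
      rw [hge j hj'] at h1
      rw [hge (j + 1) (by omega), show j + 1 - i = (j - i) + 1 by omega]
      exact hπ3 (j - i) h1
  have hcons' : ConsistentWith dupOwned σ π' := by
    intro j c d h1 ho h2
    by_cases hj : j < i
    · rw [hle j (le_of_lt hj)] at h1
      rw [hle (j + 1) hj] at h2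
      obtain rfl : c = p j := by injection h1.symm
      obtain rfl : d = p (j + 1) := by injection h2.symm
      exact hcons j hj ho
    · have hj' : i ≤ j := by omega
      rw [hge j hj'] at h1
      rw [hge (j + 1) (by omega), show j + 1 - i = (j - i) + 1 by omega] at h2
      exact hπc (j - i) c d h1 ho h2
  have h0' : π' 0 = some c0 := by rw [hle 0 (Nat.zero_le i), hp0]
  rcases hwin π' hplay' h0' hcons' with ⟨c, ⟨j, hj1, hj2⟩, hnd⟩ | ⟨hinf, hb⟩
  · left
    have hj : ¬ j + 1 ≤ i := by
      intro hji; rw [hle (j + 1) hji] at hj2; exact absurd hj2 (by simp)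
    have hj' : i ≤ j := by omega
    rw [hge j hj'] at hj1
    rw [hge (j + 1) (by omega), show j + 1 - i = (j - i) + 1 by omega] at hj2
    exact ⟨c, ⟨j - i, hj1, hj2⟩, hnd⟩
  · right
    constructor
    · intro n hn
      have := hinf (n + i)
      rw [hge (n + i) (by omega), Nat.add_sub_cancel] at this
      exact this hn
    · intro n
      obtain ⟨j, hj, c, hc, hr⟩ := hb (n + i)
      refine ⟨j - i, by omega, c, ?_, hr⟩
      rw [← hge j (by omega)]; exact hc

theorem gmove_sp_rwD4 {L : LTS S A} {E : Set Face} {rw1 : Rw} {u v : S}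
    {c : Option (A × S)} {m : Option (S × Face)} {r r' : Rw} {d : GConf S A}
    (h : GMove L E rw1 (GConf.sp (u, v) c m r) d) :
    GMove L E rw1 (GConf.sp (u, v) c m r') d := by
  cases h with
  | sp1 hc => exact GMove.sp1 hc
  | sp2a h => exact GMove.sp2a h
  | sp2b h hc => exact GMove.sp2b h hc
  | sp3 h => exact GMove.sp3 h

/-- Whether Duplicator wins a Spoiler configuration does not depend on its reward. -/
theorem dupWins_sp_rwD4 {L : LTS S A} {E : Set Face} {rw1 : Rw} {u v : S}
    {c : Option (A × S)} {m : Option (S × Face)} {r r' : Rw}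
    (h : DupWins GConf.dupOwned (GMove L E rw1) (BuchiWin GConf.reward)
      (GConf.sp (u, v) c m r)) :
    DupWins GConf.dupOwned (GMove L E rw1) (BuchiWin GConf.reward)
      (GConf.sp (u, v) c m r') := by
  obtain ⟨σ, hσ, hwin⟩ := h
  refine ⟨σ, hσ, fun π hπ hπ0 hπc => ?_⟩
  obtain ⟨hπ1, hπ2, hπ3⟩ := hπ
  set π' : ℕ → Option (GConf S A) :=
    fun n => if n = 0 then some (GConf.sp (u, v) c m r) else π n with hπ'def
  have h0' : π' 0 = some (GConf.sp (u, v) c m r) := if_pos rfl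
  have hpos : ∀ n, n ≠ 0 → π' n = π n := fun n hn => if_neg hn
  have hplay' : IsPlay (GMove L E rw1) π' := by
    refine ⟨?_, ?_, ?_⟩
    · intro j c' d h1 h2
      rcases Nat.eq_zero_or_pos j with rfl | hj
      · rw [h0'] at h1
        obtain rfl : c' = GConf.sp (u, v) c m r := by injection h1.symm
        rw [hpos 1 (by omega)] at h2
        exact gmove_sp_rwD4 (hπ1 0 _ d hπ0 h2)
      · rw [hpos j (by omega)] at h1
        rw [hpos (j + 1) (by omega)] at h2
        exact hπ1 j c' d h1 h2
    · intro j c' h1 h2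
      rcases Nat.eq_zero_or_pos j with rfl | hj
      · rw [h0'] at h1
        obtain rfl : c' = GConf.sp (u, v) c m r := by injection h1.symm
        rw [hpos 1 (by omega)] at h2
        intro d hd
        exact hπ2 0 _ hπ0 h2 d (gmove_sp_rwD4 hd)
      · rw [hpos j (by omega)] at h1
        rw [hpos (j + 1) (by omega)] at h2
        exact hπ2 j c' h1 h2
    · intro j h1
      rcases Nat.eq_zero_or_pos j with rfl | hj
      · rw [h0'] at h1; exact absurd h1 (by simp)
      · rw [hpos j (by omega)] at h1
        rw [hpos (j + 1) (by omega)]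
        exact hπ3 j h1
  have hcons' : ConsistentWith GConf.dupOwned σ π' := by
    intro j c' d h1 ho h2
    rcases Nat.eq_zero_or_pos j with rfl | hj
    · rw [h0'] at h1
      obtain rfl : c' = GConf.sp (u, v) c m r := by injection h1.symm
      exact absurd ho (fun hfalse => hfalse)
    · rw [hpos j (by omega)] at h1
      rw [hpos (j + 1) (by omega)] at h2
      exact hπc j c' d h1 ho h2
  rcases hwin π' hplay' h0' hcons' with ⟨c', ⟨j, hj1, hj2⟩, hnd⟩ | ⟨hinf, hb⟩
  · left
    rcases Nat.eq_zero_or_pos j with rfl | hj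
    · rw [h0'] at hj1
      obtain rfl : c' = GConf.sp (u, v) c m r := by injection hj1.symm
      rw [hpos 1 (by omega)] at hj2
      exact ⟨GConf.sp (u, v) c m r', ⟨0, hπ0, hj2⟩, fun hfalse => hfalse⟩
    · rw [hpos j (by omega)] at hj1
      rw [hpos (j + 1) (by omega)] at hj2
      exact ⟨c', ⟨j, hj1, hj2⟩, hnd⟩
  · right
    constructor
    · intro n
      rcases Nat.eq_zero_or_pos n with rfl | hn
      · rw [hπ0]; simp
      · rw [← hpos n (by omega)]; exact hinf n
    · intro n
      obtain ⟨j, hj, c', hc', hr⟩ := hb (n + 1)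
      exact ⟨j, by omega, c', by rw [← hpos j (by omega)]; exact hc', hr⟩

end D4aux

/-- The relation `≡ed_{E(x,y)}` satisfies the divergence condition
D₄: if `s ≡ed_{E(x,y)} t` and there is an infinite divergent sequence
`s = s₀ →τ s₁ →τ s₂ →τ ⋯`, then there exist `t'` and `k` with `t ↠⁺ t'` and
`s_k ≡ed_{E(x,y)} t'`. -/
theorem gbedEquiv_divergence_D4 {S : Type u} {A : Type v} (L : LTS S A)
    (x y : XY) (s t : S) (h : L.gbedEquiv (Exy x y) s t)
    (f : ℕ → S) (hf0 : f 0 = s) (hdiv : ∀ i, L.TauStep (f i) (f (i + 1))) :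
    ∃ t' k, L.TauPlus t t' ∧ L.gbedEquiv (Exy x y) (f k) t' := by
  subst hf0
  obtain ⟨σ, hσ, hwin⟩ := h
  set E := Exy x y with hE
  set p : ℕ → ℕ × GConf S A :=
    fun n => (dstepD4 L σ f)^[n] (0, GConf.sp (f 0, t) none none Rw.star) with hp
  have hps : ∀ n, p (n + 1) = dstepD4 L σ f (p n) := by
    intro n
    simp only [hp, Function.iterate_succ_apply']
  have hp0 : p 0 = (0, GConf.sp (f 0, t) none none Rw.star) := rfl
  have hInv : ∀ n, DInvD4 L t f (p n) := by
    intro n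
    induction n with
    | zero => exact Or.inl ⟨rfl, rfl, rfl, Relation.ReflTransGen.refl⟩
    | succ n ih =>
        rw [hps n]
        exact (dstepD4_spec L σ hσ t f hdiv (p n) ih).1
  have hspec : ∀ n, GMove L E Rw.star (p n).2 (p (n + 1)).2 ∧
      (GConf.dupOwned (p n).2 → (p (n + 1)).2 = σ (p n).2) := by
    intro n
    rw [hps n]
    exact ⟨(dstepD4_spec L σ hσ t f hdiv (p n) (hInv n)).2.1,
      (dstepD4_spec L σ hσ t f hdiv (p n) (hInv n)).2.2⟩
  set π : ℕ → Option (GConf S A) := fun n => some ((p n).2) with hπ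
  have hplay : IsPlay (GMove L E Rw.star) π := by
    refine ⟨?_, ?_, ?_⟩
    · intro i c d h1 h2
      obtain rfl : c = (p i).2 := by injection h1.symm
      obtain rfl : d = (p (i + 1)).2 := by injection h2.symm
      exact (hspec i).1
    · intro i c h1 h2
      exact absurd h2 (by simp [hπ])
    · intro i h1
      exact absurd h1 (by simp [hπ])
  have hconsπ : ConsistentWith GConf.dupOwned σ π := by
    intro i c d h1 ho h2
    obtain rfl : c = (p i).2 := by injection h1.symm
    obtain rfl : d = (p (i + 1)).2 := by injection h2.symm
    exact (hspec i).2 ho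
  have hstart : π 0 = some (GConf.sp (f 0, t) none none Rw.star) := rfl
  rcases hwin π hplay hstart hconsπ with ⟨c, ⟨i, hi1, hi2⟩, hnd⟩ | ⟨hinf, hb⟩
  · exact absurd hi2 (by simp [hπ])
  · obtain ⟨i, hi1, c, hc, hr⟩ := hb 1
    obtain ⟨j, rfl⟩ : ∃ j, i = j + 1 := ⟨i - 1, by omega⟩
    obtain rfl : c = (p (j + 1)).2 := by injection hc.symm
    -- extract the shape of the rewarded configuration
    have hext : ∃ k' v', (p (j + 1)).2 = GConf.sp (f k', v') none none Rw.check ∧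
        L.TauPlus t v' := by
      rw [hps j] at hr ⊢
      have hInvj := hInv j
      obtain ⟨⟨k, c0⟩, hq⟩ : ∃ kc, p j = kc := ⟨_, rfl⟩
      rw [hq] at hr hInvj ⊢
      rcases c0 with ⟨⟨u, v⟩, cc, m, r⟩ | ⟨⟨u, v⟩, cc, m, r⟩
      · -- Spoiler configuration: the step yields reward *, contradiction
        rcases cc with _ | cc
        · simp [dstepD4, GConf.reward] at hr
        · simp [dstepD4, GConf.reward] at hr
      · obtain ⟨hcc, vb, fc, hm, hvb, hv⟩ := hInvj
        obtain rfl : cc = some (L.tau, f (k + 1)) := hcc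
        subst hm
        have hmv : GMove L E Rw.star
            (GConf.dup (u, v) (some (L.tau, f (k + 1))) (some (vb, fc)) r)
            (σ (GConf.dup (u, v) (some (L.tau, f (k + 1))) (some (vb, fc)) r)) :=
          hσ _ trivial ⟨_, GMove.dup1⟩
        have hsnd : (dstepD4 L σ f
            (k, GConf.dup (u, v) (some (L.tau, f (k + 1))) (some (vb, fc)) r)).2 =
            σ (GConf.dup (u, v) (some (L.tau, f (k + 1))) (some (vb, fc)) r) := rfl
        rw [hsnd] at hr ⊢
        generalize hd : σ (GConf.dup (u, v) (some (L.tau, f (k + 1)))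
          (some (vb, fc)) r) = d at hmv hr ⊢
        cases hmv with
        | dup1 => simp [GConf.reward] at hr
        | dup2a h => simp [GConf.reward] at hr
        | dup2b h =>
            exact ⟨k + 1, _, rfl, Relation.TransGen.tail' hvb h⟩
        | dup2c h hE' => simp [GConf.reward] at hr
        | dup3a h => simp [GConf.reward] at hr
        | dup3b h =>
            exact ⟨k + 1, _, rfl, Relation.TransGen.tail' hvb h⟩
        | dup3c h hE' => simp [GConf.reward] at hr
    obtain ⟨k', v', hcfg, htv⟩ := hext
    have hDW : DupWins GConf.dupOwned (GMove L E Rw.star) (BuchiWin GConf.reward)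
        ((fun n => (p n).2) (j + 1)) :=
      dupWins_tailD4 hσ hwin (fun n => (p n).2) rfl (j + 1)
        (fun m _ => (hspec m).1) (fun m _ => (hspec m).2)
    rw [show (fun n => (p n).2) (j + 1) = (p (j + 1)).2 from rfl, hcfg] at hDW
    exact ⟨v', k', htv, dupWins_sp_rwD4 hDW⟩

end GamesBisim
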